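/- Let J be an invertible k×k real matrix, assume f₁,…,f_k are linearly independent, and define H_p := Σ_{q=1}^k J_{pq} · f_q for p ∈ {1,…,k}. Then the standard control vector field built from (H₁,…,H_k, g) equals (det J)² times the standard control vector field built from (f₁,…,f_k, g): v₀^{(H₁,…,H_k)} = (det J)² · v₀^{(f₁,…,f_k)}. -/

import Mathlib

open scoped RealInnerProductSpace

/-- The matrix `Σ^{(a₁,…,a_r)}_{(b₁,…,b_s)}` whose `(p,q)` entry is `⟪b_q, a_p⟫`. -/
noncomputable def sigmaMat {V : Type*} [NormedAddCommGroup V] [InnerProductSpace ℝ V]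
    {r s : ℕ} (a : Fin r → V) (b : Fin s → V) : Matrix (Fin r) (Fin s) ℝ :=
  Matrix.of fun p q => ⟪b q, a p⟫

/-- The standard control vector field built from the `k+1` vectors `f₀,…,f_k`
and the vector `g`. -/
noncomputable def v0 {V : Type*} [NormedAddCommGroup V] [InnerProductSpace ℝ V]
    {k : ℕ} (f : Fin (k+1) → V) (g : V) : V :=
  (∑ i : Fin (k+1),
    ((-1 : ℝ) ^ ((i : ℕ) + k + 1) *
      (sigmaMat f (Fin.snoc (fun j => f (i.succAbove j)) g)).det) • f i)
  + (sigmaMat f f).det • g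

/-! Pairing `v0 f g` with a vector `x` gives the Laplace expansion, along the last row, of the
bordered Gram determinant `det Σ^{(f, x)}_{(f, g)}`, so `v0` is determined by these determinants.
Replacing `f` by `H = J f` replaces both bordered frames `(f, x)` and `(f, g)` by their images
under `diag(J, 1)`, which turns the bordered Gram matrix into `diag(J, 1) Σ diag(J, 1)ᵀ`; its
determinant is multiplied by `(det J)²`. -/

theorem Fin.snoc_comp_castSucc_succAbove {α : Type*} {n : ℕ} (f : Fin (n+1) → α) (y : α)
    (i : Fin (n+1)) :
    (Fin.snoc f y : Fin (n+2) → α) ∘ i.castSucc.succAbove = Fin.snoc (f ∘ i.succAbove) y := by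
  funext q
  refine Fin.lastCases ?_ (fun j => ?_) q
  · simp [Fin.succAbove_ne_last_last (Fin.castSucc_ne_last i)]
  · simp [Fin.castSucc_succAbove_castSucc]

theorem Fin.snoc_comp_last_succAbove {α : Type*} {n : ℕ} (f : Fin n → α) (y : α) :
    (Fin.snoc f y : Fin (n+1) → α) ∘ (Fin.last n).succAbove = f := by
  funext q; simp [Fin.succAbove_last]

section
variable {V : Type*} [NormedAddCommGroup V] [InnerProductSpace ℝ V]

theorem sigmaMat_mul {r s m n : ℕ} (A : Matrix (Fin r) (Fin m) ℝ) (B : Matrix (Fin s) (Fin n) ℝ)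
    (a : Fin m → V) (b : Fin n → V) :
    sigmaMat (fun p => ∑ q, A p q • a q) (fun p => ∑ q, B p q • b q)
      = A * sigmaMat a b * B.transpose := by
  ext p q
  simp only [sigmaMat, Matrix.mul_apply, Matrix.of_apply, Matrix.transpose_apply,
    sum_inner, inner_sum, real_inner_smul_left, real_inner_smul_right, Finset.sum_mul]
  rw [Finset.sum_comm]
  exact Finset.sum_congr rfl fun i _ => Finset.sum_congr rfl fun j _ => by ring

theorem sigmaMat_submatrix {r s r' s' : ℕ} (a : Fin r → V) (b : Fin s → V) (σ : Fin r' → Fin r)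
    (τ : Fin s' → Fin s) : (sigmaMat a b).submatrix σ τ = sigmaMat (a ∘ σ) (b ∘ τ) := rfl

theorem inner_v0 {k : ℕ} (f : Fin (k+1) → V) (g x : V) :
    ⟪x, v0 f g⟫ = (sigmaMat (Fin.snoc f x) (Fin.snoc f g)).det := by
  rw [Matrix.det_succ_row _ (Fin.last (k+1)), Fin.sum_univ_castSucc]
  simp only [sigmaMat_submatrix, Fin.snoc_comp_castSucc_succAbove, Fin.snoc_comp_last_succAbove]
  simp only [v0, inner_add_right, inner_sum, real_inner_smul_right, sigmaMat,
    Matrix.of_apply, Fin.snoc_last, Fin.snoc_castSucc, Fin.val_last, Fin.val_castSucc,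
    Function.comp_def]
  rw [real_inner_comm x g, Even.neg_one_pow ⟨k + 1, rfl⟩]
  congr 1
  · refine Finset.sum_congr rfl fun i _ => ?_
    rw [real_inner_comm x (f i)]
    ring
  · ring
end

namespace Matrix
variable {R : Type*} [CommRing R] {n : ℕ}

-- The block matrix `diag(J, 1)`.
def extendByOne (J : Matrix (Fin n) (Fin n) R) : Matrix (Fin (n+1)) (Fin (n+1)) R :=
  of (Fin.snoc (fun p => Fin.snoc (J p) 0) (Fin.snoc 0 1))

theorem extendByOne_submatrix_castSucc (J : Matrix (Fin n) (Fin n) R) :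
    (extendByOne J).submatrix Fin.castSucc Fin.castSucc = J := by
  ext p q
  simp [extendByOne]

theorem det_extendByOne (J : Matrix (Fin n) (Fin n) R) : (extendByOne J).det = J.det := by
  rw [det_succ_row _ (Fin.last n), Fin.sum_univ_castSucc, Fin.succAbove_last,
    extendByOne_submatrix_castSucc]
  simp [extendByOne]

theorem extendByOne_sum_smul_snoc {M : Type*} [AddCommMonoid M] [Module R M]
    (J : Matrix (Fin n) (Fin n) R) (a : Fin n → M) (y : M) :
    (fun p => ∑ q, extendByOne J p q • (Fin.snoc a y : Fin (n+1) → M) q)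
      = Fin.snoc (fun p => ∑ q, J p q • a q) y := by
  funext p
  refine Fin.lastCases ?_ (fun i => ?_) p <;> simp [extendByOne, Fin.sum_univ_castSucc]

end Matrix

theorem stmt_14_general {V : Type*} [NormedAddCommGroup V] [InnerProductSpace ℝ V]
    (k : ℕ) (f : Fin (k+1) → V) (g : V)
    (J : Matrix (Fin (k+1)) (Fin (k+1)) ℝ)
    (H : Fin (k+1) → V) (hH : ∀ p, H p = ∑ q : Fin (k+1), J p q • f q) :
    v0 H g = (J.det) ^ 2 • v0 f g := by
  have snoc_H : ∀ y : V, (Fin.snoc H y : Fin (k+2) → V)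
      = fun p => ∑ q, J.extendByOne p q • (Fin.snoc f y : Fin (k+2) → V) q := by
    intro y
    rw [Matrix.extendByOne_sum_smul_snoc, funext hH]
  refine ext_inner_left ℝ fun x => ?_
  rw [real_inner_smul_right, inner_v0, inner_v0, snoc_H x, snoc_H g, sigmaMat_mul,
    Matrix.det_mul, Matrix.det_mul, Matrix.det_transpose, Matrix.det_extendByOne]
  ring

theorem stmt_14 {V : Type*} [NormedAddCommGroup V] [InnerProductSpace ℝ V]
    [FiniteDimensional ℝ V] (k : ℕ) (f : Fin (k+1) → V) (g : V)
    (hf : LinearIndependent ℝ f)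
    (J : Matrix (Fin (k+1)) (Fin (k+1)) ℝ) (hJ : IsUnit J.det)
    (H : Fin (k+1) → V) (hH : ∀ p, H p = ∑ q : Fin (k+1), J p q • f q) :
    v0 H g = (J.det) ^ 2 • v0 f g :=
  stmt_14_general k f g J H hH
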